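/- arXiv:1002.3017 — 4 statements merged into one kernel-verified Lean document; each statement's English description precedes it below -/
import Mathlib

section
/- Let G be a compact abelian topological group. If K ⊆ Ĝ is a strictly positive definite set, then the subgroup of Ĝ generated by K is all of Ĝ. -/
/-- A subset `K` of the Pontryagin dual of `G` is strictly positive definite if the only
trigonometric polynomial `γ ↦ ∑ i, c i * γ (x i)` (with pairwise distinct points `x i`)
vanishing at every element of `K` is the one with all coefficients zero. -/
def IsSPDSet {G : Type*} [Monoid G] [TopologicalSpace G]
    (K : Set (PontryaginDual G)) : Prop :=
  ∀ (n : ℕ) (x : Fin n → G) (c : Fin n → ℂ), Function.Injective x →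
    (∀ γ ∈ K, ∑ i, c i * (γ (x i) : ℂ) = 0) → ∀ i, c i = 0

/-!
If `γ₀ ∈ Ĝ` lay outside the subgroup `H` generated by `K`, then `γ₀` would be orthogonal in
`L²(Haar)` to every character in `H`, since `γ₀⁻¹ γ` is a nontrivial character and so has integral
zero; hence it would be orthogonal to the linear span of `H`, which is a star subalgebra of
`C(G, ℂ)`. Strict positive definiteness applied to `δ_x - δ_y` shows that `K` separates the points
of `G`, so by Stone–Weierstrass this span is dense, and `γ₀` would be orthogonal to itself.
-/

open MeasureTheory

namespace ContinuousMap

section Integral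

variable {X E : Type*} [TopologicalSpace X] [CompactSpace X] [MeasurableSpace X] [BorelSpace X]
  [NormedAddCommGroup E] [NormedSpace ℝ E] [CompleteSpace E] [SecondCountableTopologyEither X E]
  (𝕜 : Type*) [NontriviallyNormedField 𝕜] [NormedSpace 𝕜 E] [SMulCommClass ℝ 𝕜 E]
  (μ : Measure X) [IsFiniteMeasure μ]

noncomputable def integralCLM : C(X, E) →L[𝕜] E :=
  (L1.integralCLM' 𝕜).comp (toLp 1 μ 𝕜)

@[simp]
theorem integralCLM_apply (f : C(X, E)) : integralCLM 𝕜 μ f = ∫ x, f x ∂μ := by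
  have h := L1.integral_eq' 𝕜 (toLp (E := E) 1 μ 𝕜 f)
  rw [L1.integral_eq_integral] at h
  rw [integralCLM, ContinuousLinearMap.comp_apply, ← h]
  exact integral_congr_ae (coeFn_toLp μ f)

end Integral

end ContinuousMap

namespace PontryaginDual

section Monoid

variable {A : Type*} [Monoid A] [TopologicalSpace A]

noncomputable def toContinuousMapComplex : PontryaginDual A →* C(A, ℂ) where
  toFun γ := ⟨fun x => (γ x : ℂ), continuous_subtype_val.comp γ.continuous⟩
  map_one' := rfl
  map_mul' _ _ := rfl

@[simp]
theorem toContinuousMapComplex_apply (γ : PontryaginDual A) (x : A) :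
    toContinuousMapComplex γ x = γ x := rfl

theorem mul_apply (γ χ : PontryaginDual A) (x : A) : (γ * χ) x = γ x * χ x := rfl

theorem inv_apply (γ : PontryaginDual A) (x : A) : γ⁻¹ x = (γ x)⁻¹ := rfl

theorem star_toContinuousMapComplex (γ : PontryaginDual A) :
    star (toContinuousMapComplex γ) = toContinuousMapComplex γ⁻¹ := by
  ext x
  rw [ContinuousMap.star_apply, toContinuousMapComplex_apply, toContinuousMapComplex_apply,
    inv_apply, Circle.coe_inv_eq_conj]
  rfl

theorem starAlgebra_adjoin_subset_span (H : Subgroup (PontryaginDual A)) :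
    (StarAlgebra.adjoin ℂ (toContinuousMapComplex '' (H : Set (PontryaginDual A))) : Set C(A, ℂ)) ⊆
      Submodule.span ℂ (toContinuousMapComplex '' (H : Set (PontryaginDual A))) := by
  rw [← StarSubalgebra.coe_toSubalgebra, ← Subalgebra.coe_toSubmodule, StarAlgebra.adjoin_eq_span]
  refine Submodule.span_mono (Submonoid.closure_le (S := H.toSubmonoid.map _).2 ?_)
  refine Set.union_subset subset_rfl ?_
  rintro f ⟨γ, hγ, hf⟩
  refine ⟨γ⁻¹, H.inv_mem hγ, ?_⟩
  rw [← star_toContinuousMapComplex, hf, star_star]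

theorem separatesPoints_starAlgebra_adjoin {K : Set (PontryaginDual A)}
    (hK : ∀ x y : A, x ≠ y → ∃ γ ∈ K, γ x ≠ γ y) :
    (StarAlgebra.adjoin ℂ (toContinuousMapComplex '' K)).SeparatesPoints := by
  intro x y hxy
  obtain ⟨γ, hγ, hγxy⟩ := hK x y hxy
  refine ⟨_, ⟨toContinuousMapComplex γ, StarAlgebra.subset_adjoin ℂ _ ⟨γ, hγ, rfl⟩, rfl⟩, ?_⟩
  simpa [Circle.coe_inj] using hγxy

end Monoid

theorem integral_eq_zero_of_ne_one {G : Type*} [Group G] [TopologicalSpace G] [MeasurableSpace G]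
    [MeasurableMul G] (μ : Measure G) [μ.IsMulLeftInvariant] {χ : PontryaginDual G}
    (hχ : χ ≠ 1) : ∫ x, (χ x : ℂ) ∂μ = 0 := by
  obtain ⟨g, hg⟩ : ∃ g, χ g ≠ 1 := by
    by_contra! h
    exact hχ (ext h)
  have h : ∫ x, (χ x : ℂ) ∂μ = χ g * ∫ x, (χ x : ℂ) ∂μ := calc
    ∫ x, (χ x : ℂ) ∂μ = ∫ x, (χ (g * x) : ℂ) ∂μ :=
      (integral_mul_left_eq_self (fun x => (χ x : ℂ)) g).symm
    _ = ∫ x, (χ g : ℂ) * χ x ∂μ := by simp only [_root_.map_mul, Circle.coe_mul]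
    _ = χ g * ∫ x, (χ x : ℂ) ∂μ := integral_const_mul _ _
  have hg' : (χ g : ℂ) ≠ 1 := by rwa [ne_eq, ← Circle.coe_one, Circle.coe_inj]
  have h' : ((χ g : ℂ) - 1) * ∫ x, (χ x : ℂ) ∂μ = 0 := by linear_combination -h
  exact (mul_eq_zero.1 h').resolve_left (sub_ne_zero.2 hg')

section CompactGroup

variable {G : Type*} [Group G] [TopologicalSpace G] [IsTopologicalGroup G] [CompactSpace G]

theorem integral_mul_eq_zero_of_mem_closure_adjoin [MeasurableSpace G] [BorelSpace G]
    (μ : Measure G) [IsFiniteMeasure μ] [μ.IsMulLeftInvariant] {H : Subgroup (PontryaginDual G)}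
    {γ₀ : PontryaginDual G} (hγ₀ : γ₀ ∉ H) {f : C(G, ℂ)}
    (hf : f ∈ closure
      (StarAlgebra.adjoin ℂ (toContinuousMapComplex '' (H : Set (PontryaginDual G))) :
        Set C(G, ℂ))) :
    ∫ x, (γ₀⁻¹ x : ℂ) * f x ∂μ = 0 := by
  let pairing : C(G, ℂ) →L[ℂ] ℂ := (ContinuousMap.integralCLM ℂ μ).comp
    (ContinuousLinearMap.mul ℂ _ (toContinuousMapComplex γ₀⁻¹))
  have pairing_apply (g : C(G, ℂ)) : pairing g = ∫ x, (γ₀⁻¹ x : ℂ) * g x ∂μ := by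
    simp [pairing]
  have hspan : Submodule.span ℂ (toContinuousMapComplex '' (H : Set (PontryaginDual G))) ≤
      pairing.ker := by
    rw [Submodule.span_le]
    rintro _ ⟨γ, hγ, rfl⟩
    rw [SetLike.mem_coe, LinearMap.mem_ker, ContinuousLinearMap.coe_coe, pairing_apply]
    have hne : γ₀⁻¹ * γ ≠ 1 := fun h => hγ₀ (by rwa [inv_mul_eq_one.1 h])
    simpa only [mul_apply, Circle.coe_mul, toContinuousMapComplex_apply] using
      integral_eq_zero_of_ne_one μ hne
  have := closure_minimal ((starAlgebra_adjoin_subset_span H).trans hspan) pairing.isClosed_ker hf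
  rwa [SetLike.mem_coe, LinearMap.mem_ker, ContinuousLinearMap.coe_coe, pairing_apply] at this

theorem subgroup_eq_top_of_separatesPoints (H : Subgroup (PontryaginDual G))
    (hH : ∀ x y : G, x ≠ y → ∃ γ ∈ H, γ x ≠ γ y) : H = ⊤ := by
  borelize G
  refine (Subgroup.eq_top_iff' H).2 fun γ₀ => by_contra fun hγ₀ => ?_
  have hdense := ContinuousMap.starSubalgebra_topologicalClosure_eq_top_of_separatesPoints _
    (separatesPoints_starAlgebra_adjoin hH)
  have hγ₀_mem : toContinuousMapComplex γ₀ ∈ closure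
      (StarAlgebra.adjoin ℂ (toContinuousMapComplex '' (H : Set (PontryaginDual G))) :
        Set C(G, ℂ)) := by
    rw [← StarSubalgebra.topologicalClosure_coe, hdense]
    trivial
  have h := integral_mul_eq_zero_of_mem_closure_adjoin (Measure.haar : Measure G) hγ₀ hγ₀_mem
  simp only [toContinuousMapComplex_apply, ← Circle.coe_mul, ← mul_apply, inv_mul_cancel,
    one_apply, Circle.coe_one, integral_const, Complex.real_smul, mul_one,
    Complex.ofReal_eq_zero] at h
  exact measureReal_univ_pos.ne' h

end CompactGroup

end PontryaginDual

theorem IsSPDSet.exists_apply_ne {G : Type*} [Monoid G] [TopologicalSpace G]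
    {K : Set (PontryaginDual G)} (hK : IsSPDSet K) {x y : G} (hxy : x ≠ y) :
    ∃ γ ∈ K, γ x ≠ γ y := by
  by_contra! h
  have hinj : Function.Injective ![x, y] := by
    intro i j hij
    fin_cases i <;> fin_cases j <;> simp_all
  have := hK 2 ![x, y] ![1, -1] hinj fun γ hγ => by simp [Fin.sum_univ_two, h γ hγ]
  simpa using this 0

/-- A strictly positive definite subset of the dual of a compact abelian group generates
the whole dual group. -/
theorem spdSet_generates
    {G : Type*} [CommGroup G] [TopologicalSpace G] [IsTopologicalGroup G] [CompactSpace G]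
    (K : Set (PontryaginDual G)) (hK : IsSPDSet K) :
    Subgroup.closure K = ⊤ :=
  PontryaginDual.subgroup_eq_top_of_separatesPoints _ fun _ _ hxy =>
    let ⟨γ, hγ, hγxy⟩ := hK.exists_apply_ne hxy
    ⟨γ, Subgroup.subset_closure hγ, hγxy⟩
end

section
/- Let G be a compact abelian topological group (Hausdorff). There exists a continuous strictly positive definite function f : G → ℂ if and only if G is metrizable. -/
open scoped ComplexOrder

/-- `f : G → ℂ` is positive definite if all the quadratic-form sums are nonnegative reals
(using the partial order on `ℂ`). -/
def IsPosDefFun {G : Type*} [Group G] (f : G → ℂ) : Prop :=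
  ∀ (n : ℕ) (x : Fin n → G) (c : Fin n → ℂ),
    0 ≤ ∑ i, ∑ j, c i * (starRingEnd ℂ) (c j) * f ((x j)⁻¹ * x i)

/-- `f : G → ℂ` is strictly positive definite if it is positive definite and the sums are
strictly positive whenever the points are pairwise distinct and the coefficients are not
all zero. -/
def IsStrictPosDefFun {G : Type*} [Group G] (f : G → ℂ) : Prop :=
  IsPosDefFun f ∧ ∀ (n : ℕ) (x : Fin n → G) (c : Fin n → ℂ),
    Function.Injective x → c ≠ 0 →
    0 < ∑ i, ∑ j, c i * (starRingEnd ℂ) (c j) * f ((x j)⁻¹ * x i)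

/-!
If `f` is continuous and strictly positive definite, then `x ↦ (t ↦ f (t * x))` is a continuous
injection of the compact group `G` into the metric space `C(G, ℂ)`, hence an embedding: testing
strict positivity on two points `a ≠ b` with coefficients `1, -1` shows that distinct points have
distinct translates.

Conversely, for continuous `h` and a Haar measure `μ`, the autocorrelation
`g ↦ ∫ h (g⁻¹ s) * conj (h s) dμ` has quadratic form `∫ |∑ cᵢ h (xᵢ⁻¹ s)|² dμ ≥ 0`, by left
invariance of `μ`. For a compatible metric, sum the autocorrelations of the tents of height and
radius `2⁻ᵏ` at `1`. Given distinct points `xᵢ`, some tent is narrow enough that at `s = x_{i₀}`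
only the term `i₀` survives, so the quadratic form of that summand, and hence of the sum, is
positive.
-/

open MeasureTheory Filter Topology

section Group

variable {G : Type*} [Group G]

def posDefForm (f : G → ℂ) {n : ℕ} (x : Fin n → G) (c : Fin n → ℂ) : ℂ :=
  ∑ i, ∑ j, c i * (starRingEnd ℂ) (c j) * f ((x j)⁻¹ * x i)

theorem posDefForm_pair (f : G → ℂ) (a b : G) :
    posDefForm f ![a, b] ![1, -1] = 2 * f 1 - f (b⁻¹ * a) - f (a⁻¹ * b) := by
  simp only [posDefForm, Fin.sum_univ_two, Matrix.cons_val_zero, Matrix.cons_val_one,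
    inv_mul_cancel, map_one, map_neg]
  ring

theorem IsStrictPosDefFun.eq_of_forall_mul_eq {f : G → ℂ} (hf : IsStrictPosDefFun f) {a b : G}
    (hab : ∀ t, f (t * a) = f (t * b)) : a = b := by
  by_contra hne
  have hinj : Function.Injective ![a, b] := by
    intro i j hij
    fin_cases i <;> fin_cases j <;> simp_all [eq_comm]
  have hpos := hf.2 2 ![a, b] ![1, -1] hinj (by simp [funext_iff, Fin.forall_fin_two])
  have h₁ : f (b⁻¹ * a) = f 1 := by simpa using hab b⁻¹
  have h₂ : f (a⁻¹ * b) = f 1 := by simpa using (hab a⁻¹).symm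
  rw [← posDefForm, posDefForm_pair, h₁, h₂, show 2 * f 1 - f 1 - f 1 = 0 by ring] at hpos
  exact hpos.false

theorem hasSum_posDefForm {ι : Type*} {f : ι → G → ℂ} {F : G → ℂ} (hF : ∀ g, HasSum (fun k ↦ f k g) (F g))
    {n : ℕ} (x : Fin n → G) (c : Fin n → ℂ) :
    HasSum (fun k ↦ posDefForm (f k) x c) (posDefForm F x c) :=
  hasSum_sum fun _ _ ↦ hasSum_sum fun _ _ ↦ (hF _).mul_left _

theorem isStrictPosDefFun_of_hasSum {ι : Type*} {f : ι → G → ℂ} {F : G → ℂ}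
    (hF : ∀ g, HasSum (fun k ↦ f k g) (F g)) (hf : ∀ k, IsPosDefFun (f k))
    (hpos : ∀ (n : ℕ) (x : Fin n → G) (c : Fin n → ℂ), Function.Injective x → c ≠ 0 →
      ∃ k, 0 < posDefForm (f k) x c) :
    IsStrictPosDefFun F := by
  refine ⟨fun n x c ↦ (hasSum_posDefForm hF x c).nonneg fun k ↦ hf k n x c,
    fun n x c hx hc ↦ ?_⟩
  obtain ⟨k, hk⟩ := hpos n x c hx hc
  exact hasSum_lt (f := 0) (fun k ↦ hf k n x c) hk hasSum_zero (hasSum_posDefForm hF x c)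

end Group

theorem metrizableSpace_of_continuous_strictPosDefFun {G : Type*} [Group G] [TopologicalSpace G]
    [ContinuousMul G] [CompactSpace G] {f : G → ℂ} (hf : Continuous f)
    (hpd : IsStrictPosDefFun f) : TopologicalSpace.MetrizableSpace G := by
  let translates : C(G, C(G, ℂ)) := ContinuousMap.curry ⟨fun p ↦ f (p.2 * p.1), by fun_prop⟩
  have hinj : Function.Injective translates := fun a b hab ↦
    hpd.eq_of_forall_mul_eq fun t ↦ ContinuousMap.congr_fun hab t
  exact (translates.continuous.isClosedEmbedding hinj).isEmbedding.metrizableSpace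

section Autocorrelation

variable {G : Type*} [Group G] [MeasurableSpace G] (μ : Measure G)

noncomputable def autocorr (h : G → ℂ) (g : G) : ℂ :=
  ∫ s, h (g⁻¹ * s) * starRingEnd ℂ (h s) ∂μ

theorem autocorr_inv_mul [MeasurableMul G] [μ.IsMulLeftInvariant] (h : G → ℂ) (a b : G) :
    autocorr μ h (b⁻¹ * a) = ∫ s, h (a⁻¹ * s) * starRingEnd ℂ (h (b⁻¹ * s)) ∂μ := by
  conv_rhs => rw [← integral_mul_left_eq_self _ b]
  simp only [autocorr, mul_inv_rev, inv_inv, mul_assoc, inv_mul_cancel_left]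

variable {h : G → ℂ} [IsFiniteMeasure μ]

theorem norm_autocorr_le {C : ℝ} (hC : ∀ g, ‖h g‖ ≤ C) (g : G) :
    ‖autocorr μ h g‖ ≤ C ^ 2 * μ.real Set.univ := by
  refine norm_integral_le_of_norm_le_const (ae_of_all _ fun s ↦ ?_)
  rw [norm_mul, Complex.norm_conj, sq]
  exact mul_le_mul (hC _) (hC _) (norm_nonneg _) ((norm_nonneg _).trans (hC 1))

variable [TopologicalSpace G] [IsTopologicalGroup G] [CompactSpace G] [BorelSpace G]

theorem posDefForm_autocorr [μ.IsMulLeftInvariant] (hh : Continuous h) {n : ℕ}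
    (x : Fin n → G) (c : Fin n → ℂ) :
    posDefForm (autocorr μ h) x c = ((∫ s, ‖∑ i, c i * h ((x i)⁻¹ * s)‖ ^ 2 ∂μ : ℝ) : ℂ) := by
  have hint : ∀ i j, Integrable (fun s ↦ c i * starRingEnd ℂ (c j) *
      (h ((x i)⁻¹ * s) * starRingEnd ℂ (h ((x j)⁻¹ * s)))) μ := fun i j ↦
    Continuous.integrable_of_hasCompactSupport (by fun_prop) (.of_compactSpace _)
  calc posDefForm (autocorr μ h) x c
      = ∑ i, ∑ j, ∫ s, c i * starRingEnd ℂ (c j) *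
          (h ((x i)⁻¹ * s) * starRingEnd ℂ (h ((x j)⁻¹ * s))) ∂μ := by
        simp only [posDefForm, autocorr_inv_mul, integral_const_mul]
    _ = ∫ s, ∑ i, ∑ j, c i * starRingEnd ℂ (c j) *
          (h ((x i)⁻¹ * s) * starRingEnd ℂ (h ((x j)⁻¹ * s))) ∂μ := by
        rw [integral_finsetSum _ fun i _ ↦ integrable_finsetSum _ fun j _ ↦ hint i j]
        simp only [integral_finsetSum _ fun j _ ↦ hint _ j]
    _ = ∫ s, ((‖∑ i, c i * h ((x i)⁻¹ * s)‖ ^ 2 : ℝ) : ℂ) ∂μ := by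
        congr 1 with s
        rw [Complex.ofReal_pow, ← Complex.mul_conj', map_sum, Finset.sum_mul_sum]
        exact Finset.sum_congr rfl fun i _ ↦ Finset.sum_congr rfl fun j _ ↦ by
          rw [map_mul]; ring
    _ = _ := integral_ofReal

theorem isPosDefFun_autocorr [μ.IsMulLeftInvariant] (hh : Continuous h) :
    IsPosDefFun (autocorr μ h) := fun n x c ↦ by
  rw [← posDefForm, posDefForm_autocorr μ hh, Complex.zero_le_real]
  exact integral_nonneg fun _ ↦ by positivity

theorem posDefForm_autocorr_pos [μ.IsMulLeftInvariant] [μ.IsOpenPosMeasure] (hh : Continuous h)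
    {n : ℕ} {x : Fin n → G} {c : Fin n → ℂ} {s₀ : G}
    (hs₀ : ∑ i, c i * h ((x i)⁻¹ * s₀) ≠ 0) :
    0 < posDefForm (autocorr μ h) x c := by
  rw [posDefForm_autocorr μ hh, Complex.zero_lt_real]
  exact Continuous.integral_pos_of_hasCompactSupport_nonneg_nonzero (by fun_prop)
    (.of_compactSpace _) (fun _ ↦ by positivity) (pow_ne_zero 2 (norm_ne_zero_iff.2 hs₀))

theorem continuous_autocorr [FirstCountableTopology G] (hh : Continuous h) :
    Continuous (autocorr μ h) := by
  have := continuous_parametric_integral_of_continuous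
    (μ := μ) (f := fun g s ↦ h (g⁻¹ * s) * starRingEnd ℂ (h s)) (by fun_prop) isCompact_univ
  rwa [Measure.restrict_univ] at this

end Autocorrelation

section Tent

variable {X : Type*} [PseudoMetricSpace X]

noncomputable def tent (a : X) (r : ℝ) (x : X) : ℝ :=
  max 0 (r - dist x a)

theorem continuous_tent (a : X) (r : ℝ) : Continuous (tent a r) := by
  unfold tent; fun_prop

theorem tent_nonneg (a : X) (r : ℝ) (x : X) : 0 ≤ tent a r x :=
  le_max_left _ _

theorem tent_le {r : ℝ} (hr : 0 ≤ r) (a x : X) : tent a r x ≤ r :=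
  max_le hr (sub_le_self _ dist_nonneg)

theorem tent_self {r : ℝ} (hr : 0 ≤ r) (a : X) : tent a r a = r := by
  simp [tent, hr]

theorem tent_eq_zero {r : ℝ} {a x : X} (h : r ≤ dist x a) : tent a r x = 0 :=
  max_eq_left (sub_nonpos.2 h)

theorem eventually_tent_eq_zero {ι : Type*} {l : Filter ι} {r : ι → ℝ} (hr : Tendsto r l (𝓝 0))
    {a x : X} (hx : 0 < dist x a) : ∀ᶠ k in l, tent a (r k) x = 0 :=
  (hr.eventually (eventually_le_nhds hx)).mono fun _ ↦ tent_eq_zero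

end Tent

theorem exists_continuous_strictPosDefFun_of_metrizable (G : Type*) [Group G]
    [TopologicalSpace G] [IsTopologicalGroup G] [CompactSpace G]
    [TopologicalSpace.MetrizableSpace G] :
    ∃ f : G → ℂ, Continuous f ∧ IsStrictPosDefFun f := by
  let := TopologicalSpace.metrizableSpaceMetric G
  borelize G
  set μ : Measure G := Measure.haar
  set r : ℕ → ℝ := fun k ↦ (1 / 2) ^ k
  set φ : ℕ → G → ℂ := fun k g ↦ tent 1 (r k) g
  have hφ : ∀ k, Continuous (φ k) := fun k ↦
    Complex.continuous_ofReal.comp (continuous_tent _ _)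
  have hbound : ∀ k g, ‖autocorr μ (φ k) g‖ ≤ μ.real Set.univ * r k := fun k g ↦ by
    have hr_sq : r k ^ 2 ≤ r k :=
      pow_le_of_le_one (by positivity) (pow_le_one₀ (by norm_num) (by norm_num)) two_ne_zero
    calc ‖autocorr μ (φ k) g‖ ≤ r k ^ 2 * μ.real Set.univ := norm_autocorr_le μ (fun g ↦ by
            simpa [φ, abs_of_nonneg (tent_nonneg _ _ _)] using tent_le (by positivity) _ _) g
      _ ≤ μ.real Set.univ * r k := by
        rw [mul_comm]; exact mul_le_mul_of_nonneg_left hr_sq measureReal_nonneg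
  have hsum : Summable fun k ↦ μ.real Set.univ * r k := summable_geometric_two.mul_left _
  refine ⟨fun g ↦ ∑' k, autocorr μ (φ k) g,
    continuous_tsum (fun k ↦ continuous_autocorr μ (hφ k)) hsum hbound,
    isStrictPosDefFun_of_hasSum (fun g ↦ (hsum.of_norm_bounded (hbound · g)).hasSum)
      (fun k ↦ isPosDefFun_autocorr μ (hφ k)) fun n x c hx hc ↦ ?_⟩
  obtain ⟨i₀, hi₀⟩ := Function.ne_iff.1 hc
  have hr : Tendsto r atTop (𝓝 0) :=
    tendsto_pow_atTop_nhds_zero_of_lt_one (by norm_num) (by norm_num)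
  have hsep : ∀ᶠ k in atTop, ∀ i, i ≠ i₀ → tent 1 (r k) ((x i)⁻¹ * x i₀) = 0 :=
    Filter.eventually_all.2 fun i ↦ Filter.eventually_imp_distrib_left.2 fun hi ↦
      eventually_tent_eq_zero hr (dist_pos.2 fun h ↦ hi (hx (inv_mul_eq_one.1 h)))
  obtain ⟨k, hk⟩ := hsep.exists
  refine ⟨k, posDefForm_autocorr_pos μ (hφ k) (s₀ := x i₀) ?_⟩
  rw [Finset.sum_eq_single i₀ (fun i _ hi ↦ by simp [φ, hk i hi]) (by simp)]
  simpa [φ, tent_self, r] using hi₀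

theorem exists_continuous_strictPosDefFun_iff_metrizable_general
    (G : Type*) [CommGroup G] [TopologicalSpace G] [IsTopologicalGroup G]
    [CompactSpace G] :
    (∃ f : G → ℂ, Continuous f ∧ IsStrictPosDefFun f) ↔
      TopologicalSpace.MetrizableSpace G :=
  ⟨fun ⟨_, hf, hpd⟩ ↦ metrizableSpace_of_continuous_strictPosDefFun hf hpd,
    fun _ ↦ exists_continuous_strictPosDefFun_of_metrizable G⟩

/-- A compact Hausdorff abelian group admits a continuous strictly positive definite
function iff it is metrizable. -/
theorem exists_continuous_strictPosDefFun_iff_metrizable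
    (G : Type*) [CommGroup G] [TopologicalSpace G] [IsTopologicalGroup G]
    [CompactSpace G] [T2Space G] :
    (∃ f : G → ℂ, Continuous f ∧ IsStrictPosDefFun f) ↔
      TopologicalSpace.MetrizableSpace G :=
  exists_continuous_strictPosDefFun_iff_metrizable_general G
end

section
/- Let G₁ and G₂ be compact abelian topological groups, identify the Pontryagin dual of G₁ × G₂ with Ĝ₁ × Ĝ₂, and let K ⊆ Ĝ₁ × Ĝ₂. For γ ∈ Ĝ₁ set K₂(γ) = {ω ∈ Ĝ₂ : (γ, ω) ∈ K}, and set K₁ = {γ ∈ Ĝ₁ : K₂(γ) is a strictly positive definite subset of Ĝ₂}. If K₁ is a strictly positive definite subset of Ĝ₁, then the set K̃ = ⋃_{γ ∈ K₁} {γ} × K₂(γ) is a strictly positive definite subset of Ĝ₁ × Ĝ₂; in particular K (which contains K̃) is strictly positive definite. -/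
/-- Strict positive definiteness for subsets of `Ĝ₁ × Ĝ₂`, identified with the dual of
`G₁ × G₂` via `(γ, ω)(x, y) = γ(x)ω(y)`: the only trigonometric polynomial
`(γ, ω) ↦ ∑ i, c i * γ (x i) * ω (y i)` with pairwise distinct points `(x i, y i)`
vanishing on `K` has all coefficients zero. -/
def IsSPDSetProd {G₁ G₂ : Type*} [Monoid G₁] [TopologicalSpace G₁]
    [Monoid G₂] [TopologicalSpace G₂]
    (K : Set (PontryaginDual G₁ × PontryaginDual G₂)) : Prop :=
  ∀ (n : ℕ) (z : Fin n → G₁ × G₂) (c : Fin n → ℂ), Function.Injective z →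
    (∀ χ ∈ K, ∑ i, c i * (χ.1 (z i).1 : ℂ) * (χ.2 (z i).2 : ℂ) = 0) → ∀ i, c i = 0

/-!
Group the terms of `∑ c_i γ(x_i) ω(y_i)` by the second coordinate `y_i = b`. For `γ ∈ K₁` the
result is a trigonometric polynomial in `ω` with distinct points `b` vanishing on `K₂(γ)`, so each
fibre sum `∑_{y_i = b} c_i γ(x_i)` vanishes. As `(x_i, y_i)` are distinct, within one fibre the
`x_i` are distinct, so that fibre sum is a trigonometric polynomial in `γ` vanishing on `K₁`,
and all its coefficients are zero.
-/

open Finset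

namespace IsSPDSet

variable {G : Type*} [Monoid G] [TopologicalSpace G] {K : Set (PontryaginDual G)}

theorem eq_zero_of_sum_finset_eq_zero (hK : IsSPDSet K) {S : Finset G} {d : G → ℂ}
    (h : ∀ γ ∈ K, ∑ b ∈ S, d b * (γ b : ℂ) = 0) : ∀ b ∈ S, d b = 0 := by
  intro b hb
  let e : Fin S.card ≃ S := S.equivFin.symm
  have hsum : ∀ γ ∈ K, ∑ k, d (e k) * (γ (e k) : ℂ) = 0 := fun γ hγ => by
    rw [e.sum_comp (fun b : S => d b * (γ b : ℂ)), sum_coe_sort S (fun b => d b * (γ b : ℂ))]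
    exact h γ hγ
  simpa using hK _ _ _ (Subtype.val_injective.comp e.injective) hsum (e.symm ⟨b, hb⟩)

theorem sum_fiber_eq_zero [DecidableEq G] (hK : IsSPDSet K) {ι : Type*} {s : Finset ι}
    {a : ι → ℂ} {y : ι → G} (h : ∀ γ ∈ K, ∑ j ∈ s, a j * (γ (y j) : ℂ) = 0) (b : G) :
    ∑ j ∈ s with y j = b, a j = 0 := by
  by_cases hb : b ∈ s.image y
  · refine hK.eq_zero_of_sum_finset_eq_zero (d := fun b => ∑ j ∈ s with y j = b, a j)
      (fun γ hγ => ?_) b hb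
    calc ∑ b ∈ s.image y, (∑ j ∈ s with y j = b, a j) * (γ b : ℂ)
        = ∑ j ∈ s, a j * (γ (y j) : ℂ) := by
          rw [← sum_fiberwise_of_maps_to fun j hj => mem_image_of_mem y hj]
          refine sum_congr rfl fun b _ => ?_
          rw [sum_mul]
          exact sum_congr rfl fun j hj => by rw [(mem_filter.1 hj).2]
      _ = 0 := h γ hγ
  · rw [filter_false_of_mem fun j hj (hjb : y j = b) => hb (hjb ▸ mem_image_of_mem y hj),
      sum_empty]

theorem eq_zero_of_injOn [DecidableEq G] (hK : IsSPDSet K) {ι : Type*} {s : Finset ι}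
    {a : ι → ℂ} {y : ι → G} (hy : Set.InjOn y s)
    (h : ∀ γ ∈ K, ∑ j ∈ s, a j * (γ (y j) : ℂ) = 0) : ∀ j ∈ s, a j = 0 := by
  intro j hj
  have hfiber : {k ∈ s | y k = y j} = {j} := by
    ext k
    simp only [mem_filter, mem_singleton]
    exact ⟨fun hk => hy hk.1 hj hk.2, by rintro rfl; exact ⟨hj, rfl⟩⟩
  simpa [hfiber] using hK.sum_fiber_eq_zero h (y j)

end IsSPDSet

namespace IsSPDSetProd

variable {G₁ G₂ : Type*} [Monoid G₁] [TopologicalSpace G₁] [Monoid G₂] [TopologicalSpace G₂]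
  {K : Set (PontryaginDual G₁ × PontryaginDual G₂)}

theorem mono {K' : Set (PontryaginDual G₁ × PontryaginDual G₂)} (hKK' : K ⊆ K')
    (hK : IsSPDSetProd K) : IsSPDSetProd K' :=
  fun n z c hz h => hK n z c hz fun χ hχ => h χ (hKK' hχ)

theorem of_isSPDSet_slices
    (hK₁ : IsSPDSet {γ : PontryaginDual G₁ | IsSPDSet {ω : PontryaginDual G₂ | (γ, ω) ∈ K}}) :
    IsSPDSetProd {χ : PontryaginDual G₁ × PontryaginDual G₂ |
      IsSPDSet {ω : PontryaginDual G₂ | (χ.1, ω) ∈ K} ∧ χ ∈ K} := by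
  classical
  intro n z c hz h i
  have hfiber : ∀ γ, IsSPDSet {ω : PontryaginDual G₂ | (γ, ω) ∈ K} → ∀ b : G₂,
      ∑ j with (z j).2 = b, c j * (γ (z j).1 : ℂ) = 0 := fun γ hγ =>
    hγ.sum_fiber_eq_zero fun ω hω => h (γ, ω) ⟨hγ, hω⟩
  have hinj : Set.InjOn (fun j => (z j).1) ({j | (z j).2 = (z i).2} : Finset (Fin n)) := by
    intro j hj k hk hjk
    exact hz (Prod.ext hjk ((mem_filter.1 hj).2.trans (mem_filter.1 hk).2.symm))
  exact hK₁.eq_zero_of_injOn hinj (fun γ hγ => hfiber γ hγ (z i).2) i (by simp)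

end IsSPDSetProd

theorem spd_of_prod_general
    {G₁ G₂ : Type*}
    [CommGroup G₁] [TopologicalSpace G₁]
    [CommGroup G₂] [TopologicalSpace G₂]
    (K : Set (PontryaginDual G₁ × PontryaginDual G₂))
    (hK₁ : IsSPDSet {γ : PontryaginDual G₁ |
      IsSPDSet {ω : PontryaginDual G₂ | (γ, ω) ∈ K}}) :
    IsSPDSetProd {χ : PontryaginDual G₁ × PontryaginDual G₂ |
        IsSPDSet {ω : PontryaginDual G₂ | (χ.1, ω) ∈ K} ∧ χ ∈ K} ∧
      IsSPDSetProd K :=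
  have hK := IsSPDSetProd.of_isSPDSet_slices hK₁
  ⟨hK, hK.mono fun _ hχ => hχ.2⟩

/-- If the set `K₁` of those `γ ∈ Ĝ₁` for which the slice `K₂(γ)` is strictly positive
definite is itself strictly positive definite, then `K̃ = ⋃_{γ ∈ K₁} {γ} × K₂(γ)` — and in
particular `K` — is a strictly positive definite subset of `Ĝ₁ × Ĝ₂`. -/
theorem spd_of_prod
    {G₁ G₂ : Type*}
    [CommGroup G₁] [TopologicalSpace G₁] [IsTopologicalGroup G₁] [CompactSpace G₁]
    [CommGroup G₂] [TopologicalSpace G₂] [IsTopologicalGroup G₂] [CompactSpace G₂]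
    (K : Set (PontryaginDual G₁ × PontryaginDual G₂))
    (hK₁ : IsSPDSet {γ : PontryaginDual G₁ |
      IsSPDSet {ω : PontryaginDual G₂ | (γ, ω) ∈ K}}) :
    IsSPDSetProd {χ : PontryaginDual G₁ × PontryaginDual G₂ |
        IsSPDSet {ω : PontryaginDual G₂ | (χ.1, ω) ∈ K} ∧ χ ∈ K} ∧
      IsSPDSetProd K :=
  spd_of_prod_general K hK₁
end

section
/- The set K = ⋃_{n=1}^∞ {n} × {m ∈ ℤ : |m| ≤ n} ⊆ ℤ² is a strictly positive definite subset of ℤ² (the dual of 𝕋²). -/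
/-!
Fix a large first exponent `p`. Grouping the points by their second coordinate `β`, the sums
`∑_{b_i = β} c_i a_i^p` are the coefficients of a one-variable exponential sum in the second
exponent `m`, which vanishes for `0 ≤ m < n` (allowed since `m ≤ p`); the Vandermonde
determinant forces each of them to vanish. Within one fibre the `a_i` are distinct, so a second
Vandermonde argument in `p` kills every `c_i`.
-/

/-- A subset `K` of `ℤ²` (the dual of `𝕋²`) is strictly positive definite if the only
trigonometric polynomial `γ ↦ ∑ i, c i * (x i).1 ^ γ.1 * (x i).2 ^ γ.2` (with pairwise
distinct points `x i ∈ 𝕋²`) vanishing on `K` has all coefficients zero. -/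
def IsSPDSetZ2 (K : Set (ℤ × ℤ)) : Prop :=
  ∀ (n : ℕ) (x : Fin n → Circle × Circle) (c : Fin n → ℂ), Function.Injective x →
    (∀ γ ∈ K, ∑ i, c i * ((x i).1 : ℂ) ^ γ.1 * ((x i).2 : ℂ) ^ γ.2 = 0) → ∀ i, c i = 0

open Finset

section Vandermonde

variable {R ι : Type*} [CommRing R] [IsDomain R]

theorem Finset.eq_zero_of_forall_sum_mul_pow_eq_zero {s : Finset ι} {a c : ι → R}
    (ha : Set.InjOn a s) (h : ∀ k < #s, ∑ i ∈ s, c i * a i ^ k = 0) :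
    ∀ i ∈ s, c i = 0 := by
  intro i hi
  let e : Fin #s ≃ s := s.equivFin.symm
  have hinj : Function.Injective fun j => a (e j) := fun j j' hjj' =>
    e.injective (Subtype.ext (ha (e j).2 (e j').2 hjj'))
  have hsum (k : Fin #s) : ∑ j, c (e j) * a (e j) ^ (k : ℕ) = 0 := by
    rw [e.sum_comp (fun i : s => c i * a i ^ (k : ℕ)), sum_coe_sort s fun i => c i * a i ^ (k : ℕ)]
    exact h k k.2
  have := congrFun (Matrix.eq_zero_of_forall_pow_sum_mul_pow_eq_zero hinj hsum) (e.symm ⟨i, hi⟩)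
  simpa using this

theorem Finset.eq_zero_of_forall_sum_mul_pow_mul_pow_eq_zero {s : Finset ι} {a b c : ι → R}
    (hab : Set.InjOn (fun i => (a i, b i)) s)
    (h : ∀ j < #s, ∀ k < #s, ∑ i ∈ s, c i * a i ^ j * b i ^ k = 0) :
    ∀ i ∈ s, c i = 0 := by
  classical
  have hfibre : ∀ j < #s, ∀ β ∈ s.image b, ∑ i ∈ s with b i = β, c i * a i ^ j = 0 := by
    intro j hj
    refine eq_zero_of_forall_sum_mul_pow_eq_zero (a := id) (Set.injOn_id _) fun k hk => ?_
    calc ∑ β ∈ s.image b, (∑ i ∈ s with b i = β, c i * a i ^ j) * id β ^ k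
        = ∑ β ∈ s.image b, ∑ i ∈ s with b i = β, c i * a i ^ j * b i ^ k := by
          refine sum_congr rfl fun β _ => ?_
          rw [sum_mul]
          exact sum_congr rfl fun i hi => by rw [(mem_filter.mp hi).2, id]
      _ = 0 := by
          rw [sum_fiberwise_of_maps_to fun i hi => mem_image_of_mem b hi]
          exact h j hj k (hk.trans_le card_image_le)
  intro i hi
  have ha : Set.InjOn a (s.filter (b · = b i)) := fun i₁ hi₁ i₂ hi₂ h₁₂ => by
    simp only [coe_filter, Set.mem_ofPred_eq] at hi₁ hi₂
    exact hab hi₁.1 hi₂.1 (Prod.ext h₁₂ (hi₁.2.trans hi₂.2.symm))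
  refine eq_zero_of_forall_sum_mul_pow_eq_zero ha (fun j hj => ?_) i (by simp [hi])
  exact hfibre j (hj.trans_le (card_filter_le _ _)) (b i) (mem_image_of_mem b hi)

end Vandermonde

/-- The set `⋃_{n ≥ 1} {n} × {-n, …, n} ⊆ ℤ²` is strictly positive definite. -/
theorem spd_triangle_set :
    IsSPDSetZ2 {γ : ℤ × ℤ | 1 ≤ γ.1 ∧ |γ.2| ≤ γ.1} := by
  intro n x c hx H
  set a : Fin n → ℂ := fun i => (x i).1
  set b : Fin n → ℂ := fun i => (x i).2
  have hab : Set.InjOn (fun i => (a i, b i)) (univ : Finset (Fin n)) :=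
    ((Circle.coe_injective.prodMap Circle.coe_injective).comp hx).injOn
  -- shifting the first exponent by `n` keeps every `(n + j, k)` with `j, k < n` inside the set
  have h : ∀ j < #(univ : Finset (Fin n)), ∀ k < #(univ : Finset (Fin n)),
      ∑ i, (c i * a i ^ n) * a i ^ j * b i ^ k = 0 := by
    intro j hj k hk
    rw [card_univ, Fintype.card_fin] at hj hk
    have := H ((n + j : ℕ), (k : ℕ)) ⟨by omega, by rw [abs_of_nonneg (by positivity)]; omega⟩
    simpa only [zpow_natCast, pow_add, mul_assoc] using this
  intro i
  have := eq_zero_of_forall_sum_mul_pow_mul_pow_eq_zero hab h i (mem_univ i)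
  exact (mul_eq_zero.mp this).resolve_right (pow_ne_zero _ (Circle.coe_ne_zero _))
end
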